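/- Fix a probability vector α. Suppose for each i ∈ [m] we have n_i ≥ 1 i.i.d. samples x_{i,1},…,x_{i,n_i} ~ P_i, independent across i. Then for every ε > 0, P( L̂(α; x) − E[L̂(α; x)] ≥ ε ) ≤ exp( −2ε² / ( Δ_L² ∑_{i=1}^m α_i² / n_i ) ). -/

import Mathlib

open MeasureTheory Finset

noncomputable section

/-- Empirical kernel matrix `K̂(x)_{ij} = (1/(n_i n_j)) ∑_a ∑_b κ(x_{i,a}, x_{j,b})`. -/
def Khat {X : Type*} (κ : X → X → ℝ) {m : ℕ} (n : Fin m → ℕ)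
    (x : (i : Fin m) → Fin (n i) → X) (i j : Fin m) : ℝ :=
  (1 / ((n i : ℝ) * (n j : ℝ))) * ∑ a, ∑ b, κ (x i a) (x j b)

/-- Empirical mean vector `f̂(x)_i = (1/n_i) ∑_a f(x_{i,a})`. -/
def fhat {X : Type*} (f : X → ℝ) {m : ℕ} (n : Fin m → ℕ)
    (x : (i : Fin m) → Fin (n i) → X) (i : Fin m) : ℝ :=
  (1 / (n i : ℝ)) * ∑ a, f (x i a)

/-- Sample loss `L̂(α; x) = αᵀ K̂(x) α + f̂(x)ᵀ α`. -/
def Lhat {X : Type*} (κ : X → X → ℝ) (f : X → ℝ) {m : ℕ} (n : Fin m → ℕ)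
    (α : Fin m → ℝ) (x : (i : Fin m) → Fin (n i) → X) : ℝ :=
  ∑ i, ∑ j, α i * α j * Khat κ n x i j + ∑ i, α i * fhat f n x i

/-- Population kernel matrix `K_{ij} = E_{X ~ P_i, X' ~ P_j}[κ(X, X')]`. -/
def Kpop {X : Type*} [MeasurableSpace X] {m : ℕ} (P : Fin m → Measure X)
    (κ : X → X → ℝ) (i j : Fin m) : ℝ :=
  ∫ p, κ p.1 p.2 ∂((P i).prod (P j))

/-- Population mean vector `f_i = E_{P_i}[f]`. -/
def fpop {X : Type*} [MeasurableSpace X] {m : ℕ} (P : Fin m → Measure X)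
    (f : X → ℝ) (i : Fin m) : ℝ :=
  ∫ y, f y ∂(P i)

/-- Population loss `L(α) = αᵀ K α + fᵀ α`. -/
def Lpop {X : Type*} [MeasurableSpace X] {m : ℕ} (P : Fin m → Measure X)
    (κ : X → X → ℝ) (f : X → ℝ) (α : Fin m → ℝ) : ℝ :=
  ∑ i, ∑ j, α i * α j * Kpop P κ i j + ∑ i, α i * fpop P f i

/-- The joint law of independent samples, `n i` i.i.d. samples from `P i` for each arm `i`. -/
def sampleMeasure {X : Type*} [MeasurableSpace X] {m : ℕ} (P : Fin m → Measure X)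
    (n : Fin m → ℕ) : Measure ((i : Fin m) → Fin (n i) → X) :=
  Measure.pi fun i => Measure.pi fun _ => P i


/-!
Index the samples by pairs `p = (i, a)`. Then `L̂` is the weighted loss
`∑ p q, w p w q κ(y p, y q) + ∑ p, w p f(y p)` with weights `w (i, a) = α i / n i` summing to at
most one, so replacing the single sample `y p` moves `L̂` by at most `w p Δ_L`: only the pairs
`(p, q)` and `(q, p)` change. McDiarmid's inequality then makes `L̂ - E L̂` sub-Gaussian with
parameter `∑ p (w p Δ_L)² / 4 = Δ_L² ∑ i, α i² / (4 n i)`, and the Chernoff bound concludes.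

McDiarmid's inequality is proved by induction on the number of coordinates. Integrating out all
but the first coordinate leaves a function whose range has width at most `c₁`, which is
sub-Gaussian with parameter `c₁² / 4` by Hoeffding's lemma; conditionally on the first coordinate
the rest is sub-Gaussian by induction, and sub-Gaussian parameters add along a product.
-/

open ProbabilityTheory Real
open scoped NNReal

namespace ProbabilityTheory.HasSubgaussianMGF

variable {α β : Type*} [MeasurableSpace α] [MeasurableSpace β]
  {μ : Measure α} {ν : Measure β} [SFinite ν]
  {X : α → ℝ} {Y : α × β → ℝ} {cX cY : ℝ≥0}

lemma integrable_exp_mul_prod_add (hX : HasSubgaussianMGF X cX μ)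
    (hY : ∀ a, HasSubgaussianMGF (fun b ↦ Y (a, b)) cY ν) (hYm : AEMeasurable Y (μ.prod ν))
    (t : ℝ) : Integrable (fun p ↦ exp (t * (X p.1 + Y p))) (μ.prod ν) := by
  have hm : AEStronglyMeasurable (fun p ↦ exp (t * (X p.1 + Y p))) (μ.prod ν) :=
    (measurable_exp.comp_aemeasurable
      ((hX.aemeasurable.comp_fst.add hYm).const_mul t)).aestronglyMeasurable
  refine (integrable_prod_iff hm).2 ⟨ae_of_all _ fun a ↦ ?_, ?_⟩
  · simpa [mul_add, exp_add] using ((hY a).integrable_exp_mul t).const_mul (exp (t * X a))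
  · refine Integrable.mono' ((hX.integrable_exp_mul t).mul_const (exp (cY * t ^ 2 / 2)))
      hm.norm.integral_prod_right' (ae_of_all _ fun a ↦ ?_)
    have hmgf := (hY a).mgf_le t
    simp only [mgf] at hmgf
    simp only [norm_eq_abs, mul_add, exp_add, abs_mul, abs_exp, integral_const_mul]
    rw [abs_of_nonneg (integral_nonneg fun _ ↦ exp_nonneg _)]
    gcongr

lemma prod_add [SFinite μ] (hX : HasSubgaussianMGF X cX μ)
    (hY : ∀ a, HasSubgaussianMGF (fun b ↦ Y (a, b)) cY ν) (hYm : AEMeasurable Y (μ.prod ν)) :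
    HasSubgaussianMGF (fun p ↦ X p.1 + Y p) (cX + cY) (μ.prod ν) where
  integrable_exp_mul := hX.integrable_exp_mul_prod_add hY hYm
  mgf_le t := by
    calc mgf (fun p ↦ X p.1 + Y p) (μ.prod ν) t
        = ∫ a, exp (t * X a) * mgf (fun b ↦ Y (a, b)) ν t ∂μ := by
          rw [mgf, integral_prod _ (hX.integrable_exp_mul_prod_add hY hYm t)]
          simp only [mgf, mul_add, exp_add, integral_const_mul]
      _ ≤ ∫ a, exp (t * X a) * exp (cY * t ^ 2 / 2) ∂μ := by
          refine integral_mono_of_nonneg (ae_of_all _ fun a ↦ ?_)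
            ((hX.integrable_exp_mul t).mul_const _) (ae_of_all _ fun a ↦ ?_)
          · exact mul_nonneg (exp_nonneg _) mgf_nonneg
          · exact mul_le_mul_of_nonneg_left ((hY a).mgf_le t) (exp_nonneg _)
      _ ≤ exp (↑(cX + cY) * t ^ 2 / 2) := by
          rw [integral_mul_const, NNReal.coe_add, add_mul, add_div, exp_add]
          gcongr
          exact hX.mgf_le t

end ProbabilityTheory.HasSubgaussianMGF

lemma exists_forall_mem_Icc_of_sub_le {ι : Type*} [Nonempty ι] {G : ι → ℝ} {c : ℝ}
    (h : ∀ i j, G i - G j ≤ c) : ∃ a, ∀ i, G i ∈ Set.Icc a (a + c) := by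
  obtain ⟨i₀⟩ := ‹Nonempty ι›
  have hbdd : BddBelow (Set.range G) :=
    ⟨G i₀ - c, by rintro _ ⟨j, rfl⟩; linarith [h i₀ j]⟩
  refine ⟨⨅ j, G j, fun i ↦ ⟨ciInf_le hbdd i, ?_⟩⟩
  linarith [le_ciInf fun j ↦ (by linarith [h i j] : G i - c ≤ G j)]

lemma hasSubgaussianMGF_sub_integral_of_measurePreserving {α β : Type*} [MeasurableSpace α]
    [MeasurableSpace β] {μ : Measure α} {ν : Measure β} {e : α ≃ᵐ β} (he : MeasurePreserving e μ ν)
    {g : β → ℝ} {c : ℝ≥0} (h : HasSubgaussianMGF (fun x ↦ g (e x) - ∫ x, g (e x) ∂μ) c μ) :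
    HasSubgaussianMGF (fun y ↦ g y - ∫ y, g y ∂ν) c ν := by
  rw [he.integral_comp' g, ← (he.symm e).map_eq] at h
  simpa [Function.comp_def] using h.of_map e.symm.measurable.aemeasurable

lemma hasSubgaussianMGF_sub_integral_prod {α β : Type*} [MeasurableSpace α] [MeasurableSpace β]
    {μ : Measure α} {ν : Measure β} [IsProbabilityMeasure μ] [IsProbabilityMeasure ν]
    {h : α × β → ℝ} (hh : Measurable h) {c : ℝ} (hc : ∀ ξ ξ' z, h (ξ, z) - h (ξ', z) ≤ c)
    {cY : ℝ≥0} (hY : ∀ ξ, HasSubgaussianMGF (fun z ↦ h (ξ, z) - ∫ z, h (ξ, z) ∂ν) cY ν) :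
    HasSubgaussianMGF (fun p ↦ h p - ∫ p, h p ∂μ.prod ν) ((‖c‖₊ / 2) ^ 2 + cY) (μ.prod ν) := by
  let G : α → ℝ := fun ξ ↦ ∫ z, h (ξ, z) ∂ν
  have hGm : Measurable G := hh.stronglyMeasurable.integral_prod_right'.measurable
  -- Every fibre is integrable because its centred version is sub-Gaussian.
  have hint : ∀ ξ, Integrable (fun z ↦ h (ξ, z)) ν := fun ξ ↦ by
    refine ((hY ξ).integrable.add (integrable_const (G ξ))).congr (ae_of_all _ fun z ↦ ?_)
    simp only [Pi.add_apply, G, sub_add_cancel]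
  have hGdiff : ∀ ξ ξ', G ξ - G ξ' ≤ c := fun ξ ξ' ↦ by
    rw [← integral_sub (hint ξ) (hint ξ')]
    refine (integral_mono ((hint ξ).sub (hint ξ')) (integrable_const c) fun z ↦ hc ξ ξ' z).trans
      (by rw [integral_const, probReal_univ, one_smul])
  have : Nonempty α := nonempty_of_isProbabilityMeasure μ
  obtain ⟨a, ha⟩ := exists_forall_mem_Icc_of_sub_le hGdiff
  have hG : HasSubgaussianMGF (fun ξ ↦ G ξ - ∫ ξ, G ξ ∂μ) ((‖c‖₊ / 2) ^ 2) μ := by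
    simpa using hasSubgaussianMGF_of_mem_Icc hGm.aemeasurable (ae_of_all _ ha)
  have hprod := hG.prod_add (Y := fun p ↦ h p - G p.1) hY
    (hh.sub (hGm.comp measurable_fst)).aemeasurable
  have hhint : Integrable h (μ.prod ν) := by
    refine (hprod.integrable.add (integrable_const (∫ ξ, G ξ ∂μ))).congr
      (ae_of_all _ fun p ↦ ?_)
    simp only [Pi.add_apply]
    ring
  refine hprod.congr (ae_of_all _ fun p ↦ ?_)
  rw [integral_prod h hhint]
  ring

theorem hasSubgaussianMGF_sub_integral_pi_fin {N : ℕ} {Ω : Fin N → Type*}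
    [∀ i, MeasurableSpace (Ω i)] (μ : ∀ i, Measure (Ω i)) [∀ i, IsProbabilityMeasure (μ i)]
    {g : (∀ i, Ω i) → ℝ} (hg : Measurable g) (c : Fin N → ℝ)
    (hc : ∀ x i y, g (Function.update x i y) - g x ≤ c i) :
    HasSubgaussianMGF (fun x ↦ g x - ∫ x, g x ∂Measure.pi μ) (∑ i, (‖c i‖₊ / 2) ^ 2)
      (Measure.pi μ) := by
  induction N with
  | zero =>
    have hconst : ∀ x, g x - ∫ x, g x ∂Measure.pi μ = 0 := fun x ↦ by
      simp [fun y ↦ congrArg g (Subsingleton.elim y x)]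
    simp [hconst]
  | succ N ih =>
    let e := MeasurableEquiv.piFinSuccAbove Ω 0
    have hh : Measurable fun p : Ω 0 × _ ↦ g (Fin.insertNth 0 p.1 p.2) :=
      hg.comp e.symm.measurable
    rw [Fin.sum_univ_succAbove _ 0]
    refine hasSubgaussianMGF_sub_integral_of_measurePreserving
      ((measurePreserving_piFinSuccAbove μ 0).symm e)
      (hasSubgaussianMGF_sub_integral_prod hh (fun ξ ξ' z ↦ ?_)
        fun ξ ↦ ih _ (hh.comp measurable_prodMk_left) _ fun z j y ↦ ?_)
    · simpa only [Fin.update_insertNth] using hc (Fin.insertNth 0 ξ' z) 0 ξ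
    · simpa only [Function.comp_apply, Fin.insertNth_update] using
        hc (Fin.insertNth 0 ξ z) (Fin.succAbove 0 j) y

theorem hasSubgaussianMGF_sub_integral_pi {ι : Type*} [Fintype ι] [DecidableEq ι]
    {Ω : ι → Type*} [∀ i, MeasurableSpace (Ω i)] (μ : ∀ i, Measure (Ω i))
    [∀ i, IsProbabilityMeasure (μ i)] {g : (∀ i, Ω i) → ℝ} (hg : Measurable g) (c : ι → ℝ)
    (hc : ∀ x i y, g (Function.update x i y) - g x ≤ c i) :
    HasSubgaussianMGF (fun x ↦ g x - ∫ x, g x ∂Measure.pi μ) (∑ i, (‖c i‖₊ / 2) ^ 2)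
      (Measure.pi μ) := by
  let e := (Fintype.equivFin ι).symm
  let E := MeasurableEquiv.piCongrLeft Ω e
  rw [← e.sum_comp]
  refine hasSubgaussianMGF_sub_integral_of_measurePreserving (measurePreserving_piCongrLeft μ e)
    (hasSubgaussianMGF_sub_integral_pi_fin _ (hg.comp E.measurable) _ fun y k s ↦ ?_)
  have hE : E (Function.update y k s) = Function.update (E y) (e k) s :=
    Function.piCongrLeft'_symm_update Ω e.symm y k s
  simpa [hE] using hc (E y) (e k) s

lemma measurePreserving_piCurry {ι : Type*} [Fintype ι] {κ : ι → Type*} [∀ i, Fintype (κ i)]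
    {X : (i : ι) → κ i → Type*} [∀ i j, MeasurableSpace (X i j)]
    (μ : (i : ι) → (j : κ i) → Measure (X i j)) [∀ i j, IsProbabilityMeasure (μ i j)] :
    MeasurePreserving (MeasurableEquiv.piCurry X) (Measure.pi fun p : (i : ι) × κ i ↦ μ p.1 p.2)
      (Measure.pi fun i ↦ Measure.pi fun j ↦ μ i j) :=
  ⟨(MeasurableEquiv.piCurry X).measurable, by
    simpa only [Measure.infinitePi_eq_pi] using Measure.infinitePi_map_piCurry μ⟩

def weightedLoss {X ι : Type*} [Fintype ι] (κ : X → X → ℝ) (f : X → ℝ) (w : ι → ℝ)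
    (y : ι → X) : ℝ :=
  ∑ p, ∑ q, w p * w q * κ (y p) (y q) + ∑ p, w p * f (y p)

lemma weightedLoss_update_sub_le {X ι : Type*} [Fintype ι] [DecidableEq ι] {κ : X → X → ℝ}
    {f : X → ℝ} {κ0 κ1 f0 f1 : ℝ} (hκ : ∀ x y, κ x y ∈ Set.Icc κ0 κ1)
    (hf : ∀ x, f x ∈ Set.Icc f0 f1) {w : ι → ℝ} (hw0 : ∀ p, 0 ≤ w p) (hw1 : ∑ p, w p ≤ 1)
    (y : ι → X) (p : ι) (s : X) :
    weightedLoss κ f w (Function.update y p s) - weightedLoss κ f w y ≤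
      w p * (2 * (κ1 - κ0) + (f1 - f0)) := by
  have hκdiff : ∀ a b c d, κ a b - κ c d ≤ κ1 - κ0 := fun a b c d ↦ by
    linarith [(hκ a b).2, (hκ c d).1]
  have hterm : ∀ q r, κ (Function.update y p s q) (Function.update y p s r) - κ (y q) (y r) ≤
      (κ1 - κ0) * ((if q = p then 1 else 0) + (if r = p then 1 else 0)) := by
    intro q r
    by_cases h : q = p ∨ r = p
    · have hcount : (1 : ℝ) ≤ (if q = p then 1 else 0) + (if r = p then 1 else 0) := by
        rcases h with h | h <;> split_ifs <;> simp_all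
      calc _ ≤ κ1 - κ0 := hκdiff _ _ _ _
        _ ≤ _ := le_mul_of_one_le_right (by linarith [hκdiff s s s s]) hcount
    · obtain ⟨hq, hr⟩ := not_or.1 h
      simp [Function.update_of_ne, hq, hr]
  have hquad : ∑ q, ∑ r, w q * w r * κ (Function.update y p s q) (Function.update y p s r) -
      ∑ q, ∑ r, w q * w r * κ (y q) (y r) ≤ w p * (2 * (κ1 - κ0)) := by
    calc _ = ∑ q, ∑ r, w q * w r *
          (κ (Function.update y p s q) (Function.update y p s r) - κ (y q) (y r)) := by
          simp only [← Finset.sum_sub_distrib, mul_sub]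
      _ ≤ ∑ q, ∑ r, w q * w r *
          ((κ1 - κ0) * ((if q = p then 1 else 0) + (if r = p then 1 else 0))) := by
          gcongr with q _ r _
          · exact mul_nonneg (hw0 q) (hw0 r)
          · exact hterm q r
      _ = w p * (2 * (κ1 - κ0)) * ∑ q, w q := by
          simp only [mul_add, mul_ite, mul_one, mul_zero, sum_add_distrib, sum_ite_irrel,
            sum_const_zero, sum_ite_eq', mem_univ, ↓reduceIte, mul_sum]
          rw [← Finset.sum_add_distrib]
          exact Finset.sum_congr rfl fun q _ ↦ by ring
      _ ≤ w p * (2 * (κ1 - κ0)) :=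
          mul_le_of_le_one_right (mul_nonneg (hw0 p) (by linarith [hκdiff s s s s])) hw1
  have hlin : ∑ q, w q * f (Function.update y p s q) - ∑ q, w q * f (y q) ≤ w p * (f1 - f0) := by
    rw [← Finset.sum_sub_distrib, Finset.sum_eq_single p (fun q _ hq ↦ by simp [hq]) (by simp)]
    simp only [Function.update_self, ← mul_sub]
    exact mul_le_mul_of_nonneg_left (by linarith [(hf s).2, (hf (y p)).1]) (hw0 p)
  simp only [weightedLoss]
  linarith

/-- For an arm without samples this is `α i / 0 = 0`, matching the junk values of `Khat` and
`fhat`. -/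
def sampleWeight {m : ℕ} (n : Fin m → ℕ) (α : Fin m → ℝ) (p : Σ i, Fin (n i)) : ℝ :=
  α p.1 / n p.1

lemma lhat_sigmaCurry {X : Type*} (κ : X → X → ℝ) (f : X → ℝ) {m : ℕ} (n : Fin m → ℕ)
    (α : Fin m → ℝ) (y : (Σ i, Fin (n i)) → X) :
    Lhat κ f n α (Sigma.curry y) = weightedLoss κ f (sampleWeight n α) y := by
  simp only [Lhat, Khat, fhat, weightedLoss, sampleWeight, Fintype.sum_sigma, Finset.mul_sum,
    Sigma.curry]
  congr 1
  · refine Finset.sum_congr rfl fun i _ ↦ ?_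
    rw [Finset.sum_comm]
    refine Finset.sum_congr rfl fun a _ ↦ Finset.sum_congr rfl fun j _ ↦
      Finset.sum_congr rfl fun b _ ↦ ?_
    field_simp
  · refine Finset.sum_congr rfl fun i _ ↦ Finset.sum_congr rfl fun a _ ↦ ?_
    field_simp

lemma sum_sampleWeight_le {m : ℕ} (n : Fin m → ℕ) {α : Fin m → ℝ} (hα : ∀ i, 0 ≤ α i) :
    ∑ p, sampleWeight n α p ≤ ∑ i, α i := by
  simp only [sampleWeight, Fintype.sum_sigma, Finset.sum_const, Finset.card_univ, Fintype.card_fin,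
    nsmul_eq_mul]
  gcongr with i
  rcases eq_or_ne (n i) 0 with h | h
  · simp [h, hα i]
  · rw [mul_div_cancel₀ _ (by exact_mod_cast h)]

lemma sum_sampleWeight_sq {m : ℕ} (n : Fin m → ℕ) (α : Fin m → ℝ) :
    ∑ p, sampleWeight n α p ^ 2 = ∑ i, α i ^ 2 / n i := by
  simp only [sampleWeight, Fintype.sum_sigma, Finset.sum_const, Finset.card_univ, Fintype.card_fin,
    nsmul_eq_mul]
  refine Finset.sum_congr rfl fun i _ ↦ ?_
  rcases eq_or_ne (n i) 0 with h | h
  · simp [h]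
  · field_simp

lemma lhat_sigmaCurry_update_sub_le {X : Type*} {κ : X → X → ℝ} {f : X → ℝ} {κ0 κ1 f0 f1 : ℝ}
    (hκ : ∀ x y, κ x y ∈ Set.Icc κ0 κ1) (hf : ∀ x, f x ∈ Set.Icc f0 f1) {m : ℕ}
    {n : Fin m → ℕ} {α : Fin m → ℝ} (hα : α ∈ stdSimplex ℝ (Fin m))
    (y : (Σ i, Fin (n i)) → X) (p : Σ i, Fin (n i)) (s : X) :
    Lhat κ f n α (Sigma.curry (Function.update y p s)) - Lhat κ f n α (Sigma.curry y) ≤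
      sampleWeight n α p * (2 * (κ1 - κ0) + (f1 - f0)) := by
  rw [lhat_sigmaCurry, lhat_sigmaCurry]
  exact weightedLoss_update_sub_le (w := sampleWeight n α) hκ hf
    (fun p ↦ div_nonneg (hα.1 p.1) (Nat.cast_nonneg _))
    ((sum_sampleWeight_le n hα.1).trans hα.2.le) y p s

lemma measurable_lhat {X : Type*} [MeasurableSpace X] {κ : X → X → ℝ} {f : X → ℝ}
    (hκ : Measurable (Function.uncurry κ)) (hf : Measurable f) {m : ℕ} (n : Fin m → ℕ)
    (α : Fin m → ℝ) : Measurable (Lhat κ f n α) := by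
  have hκx : ∀ i j a b, Measurable fun x : (i : Fin m) → Fin (n i) → X ↦ κ (x i a) (x j b) :=
    fun i j a b ↦ hκ.comp (f := fun x : (i : Fin m) → Fin (n i) → X ↦ (x i a, x j b)) (by fun_prop)
  unfold Lhat Khat fhat
  fun_prop

theorem lhat_mcdiarmid_general
    {X : Type*} [MeasurableSpace X] {m : ℕ}
    (P : Fin m → Measure X) (hP : ∀ i, IsProbabilityMeasure (P i))
    (κ : X → X → ℝ) (f : X → ℝ)
    (hκmeas : Measurable (Function.uncurry κ)) (hfmeas : Measurable f)
    (κ0 κ1 f0 f1 : ℝ)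
    (hκbdd : ∀ x y, κ x y ∈ Set.Icc κ0 κ1) (hfbdd : ∀ y, f y ∈ Set.Icc f0 f1)
    (n : Fin m → ℕ)
    (α : Fin m → ℝ) (hα : α ∈ stdSimplex ℝ (Fin m))
    (ε : ℝ) (hε : 0 < ε) :
    sampleMeasure P n
      {x | Lhat κ f n α x - (∫ y, Lhat κ f n α y ∂(sampleMeasure P n)) ≥ ε} ≤
      ENNReal.ofReal
        (Real.exp (-(2 * ε ^ 2) /
          ((2 * (κ1 - κ0) + (f1 - f0)) ^ 2 * ∑ i, α i ^ 2 / (n i : ℝ)))) := by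
  set ΔL := 2 * (κ1 - κ0) + (f1 - f0)
  have hsub := hasSubgaussianMGF_sub_integral_of_measurePreserving
    (measurePreserving_piCurry fun i (_ : Fin (n i)) ↦ P i)
    (hasSubgaussianMGF_sub_integral_pi (fun p ↦ P p.1)
      ((measurable_lhat hκmeas hfmeas n α).comp (MeasurableEquiv.piCurry _).measurable)
      (fun p ↦ sampleWeight n α p * ΔL) fun y p s ↦
        lhat_sigmaCurry_update_sub_le hκbdd hfbdd hα y p s)
  have hconst : ((∑ p, (‖sampleWeight n α p * ΔL‖₊ / 2) ^ 2 : ℝ≥0) : ℝ) =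
      ΔL ^ 2 * (∑ i, α i ^ 2 / (n i : ℝ)) / 4 := by
    push_cast
    simp only [norm_eq_abs, div_pow, sq_abs, mul_pow, ← Finset.sum_div,
      ← Finset.sum_mul, sum_sampleWeight_sq]
    ring
  have htail := hsub.measure_ge_le hε.le
  rw [hconst] at htail
  unfold sampleMeasure
  rw [ENNReal.le_ofReal_iff_toReal_le (measure_ne_top _ _) (exp_nonneg _)]
  refine htail.trans_eq (congrArg exp ?_)
  clear_value ΔL
  ring

/-- McDiarmid-type concentration: for all `ε > 0`,
`P( L̂(α;x) − E[L̂(α;x)] ≥ ε ) ≤ exp( −2ε² / (Δ_L² ∑_i α_i²/n_i) )`. -/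
theorem lhat_mcdiarmid
    {X : Type*} [MeasurableSpace X] {m : ℕ}
    (P : Fin m → Measure X) (hP : ∀ i, IsProbabilityMeasure (P i))
    (κ : X → X → ℝ) (f : X → ℝ)
    (hκmeas : Measurable (Function.uncurry κ)) (hfmeas : Measurable f)
    (κ0 κ1 f0 f1 : ℝ)
    (hκbdd : ∀ x y, κ x y ∈ Set.Icc κ0 κ1) (hfbdd : ∀ y, f y ∈ Set.Icc f0 f1)
    (hκsymm : ∀ x y, κ x y = κ y x)
    (n : Fin m → ℕ) (hn : ∀ i, 1 ≤ n i)
    (α : Fin m → ℝ) (hα : α ∈ stdSimplex ℝ (Fin m))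
    (ε : ℝ) (hε : 0 < ε) :
    sampleMeasure P n
      {x | Lhat κ f n α x - (∫ y, Lhat κ f n α y ∂(sampleMeasure P n)) ≥ ε} ≤
      ENNReal.ofReal
        (Real.exp (-(2 * ε ^ 2) /
          ((2 * (κ1 - κ0) + (f1 - f0)) ^ 2 * ∑ i, α i ^ 2 / (n i : ℝ)))) :=
  lhat_mcdiarmid_general P hP κ f hκmeas hfmeas κ0 κ1 f0 f1 hκbdd hfbdd n α hα ε hε
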